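/- For every integer d ≥ 1, the polynomial P_d has degree d−1 and its leading coefficient equals 2^{d-1}/(d-1)!. Moreover P_d is an even polynomial when d is odd and an odd polynomial when d is even, and when d is odd the constant term of P_d equals 1. -/

import Mathlib

/-!
Since `∏_{k=1}^{j} (x - k) / j! = binom(x - 1, j)`, the polynomial is
`P_d(x) = Σ_{j<d} binom(d, j+1) 2^j binom(x - 1, j)`, a formula that makes sense in any binomial
ring. Writing `binom(-x-1, j) = (-1)^j binom((x-1) + (j+1), j)` and expanding by Vandermonde
expresses `P_d(-x)` in the same basis, with coefficients
`Σ_j binom(d, j+1) binom(j+1, a+1) (-2)^j = (-1)^(d-1) 2^a binom(d, a+1)` by the binomial theorem.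
At `x = 0` the formula gives `Σ_j binom(d, j+1) (-2)^j = (1 - (-1)^d) / 2`. The degree and the
leading coefficient come from the term `j = d - 1`, the only one of degree `d - 1`.
-/

open Polynomial Finset

noncomputable section

/-- The polynomial `P_d(X) = Σ_{δ=1}^d binom(d,δ) 2^{δ-1} (∏_{k=1}^{δ-1}(X−k))/(δ−1)!`,
with the empty product equal to `1` for `δ = 1`. -/
def Ppoly (d : ℕ) : Polynomial ℝ :=
  ∑ δ ∈ Finset.Icc 1 d,
    Polynomial.C ((d.choose δ : ℝ) * 2 ^ (δ - 1) / (Nat.factorial (δ - 1) : ℝ)) *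
      ∏ k ∈ Finset.Icc 1 (δ - 1), (Polynomial.X - Polynomial.C (k : ℝ))

section Degree

variable {R : Type*} [Semiring R] {p : ℕ → R[X]}

theorem natDegree_sum_range_C_mul_le (hp : ∀ j, (p j).natDegree ≤ j) (c : ℕ → R) (n : ℕ) :
    (∑ j ∈ range (n + 1), C (c j) * p j).natDegree ≤ n :=
  natDegree_sum_le_of_forall_le _ _ fun j hj =>
    natDegree_C_mul_le _ _ |>.trans <| (hp j).trans <| Nat.lt_succ_iff.1 <| mem_range.1 hj

theorem coeff_sum_range_C_mul_self (hp : ∀ j, (p j).natDegree ≤ j) (hn : (p n).coeff n = 1)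
    (c : ℕ → R) : (∑ j ∈ range (n + 1), C (c j) * p j).coeff n = c n := by
  have hlow : ∀ j ∈ range n, (C (c j) * p j).coeff n = 0 := fun j hj => by
    rw [coeff_C_mul, coeff_eq_zero_of_natDegree_lt ((hp j).trans_lt (mem_range.1 hj)), mul_zero]
  rw [finsetSum_coeff, sum_range_succ, sum_eq_zero hlow, zero_add, coeff_C_mul, hn, mul_one]

end Degree

section BinomialRing

variable {R : Type*} [CommRing R]

theorem sum_range_choose_mul_pow (x : R) (n : ℕ) :
    ∑ t ∈ range (n + 1), (n.choose t : R) * x ^ t = (1 + x) ^ n := by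
  rw [add_comm 1 x, add_pow]
  simp only [one_pow, mul_one, mul_comm]

theorem mul_sum_range_choose_succ_mul_pow (x : R) (d : ℕ) :
    x * ∑ j ∈ range d, (d.choose (j + 1) : R) * x ^ j = (1 + x) ^ d - 1 := by
  rw [← sum_range_choose_mul_pow, sum_range_succ', mul_sum]
  simp only [Nat.choose_zero_right, Nat.cast_one, pow_zero, mul_one, add_sub_cancel_right]
  exact sum_congr rfl fun j _ => by ring

theorem sum_range_choose_succ_mul_choose_succ_mul_neg_two_pow {d a : ℕ} (ha : a < d) :
    ∑ j ∈ range d, (d.choose (j + 1) * (j + 1).choose (a + 1) : R) * (-2) ^ j =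
      (-1) ^ (d - 1) * 2 ^ a * d.choose (a + 1) := by
  obtain ⟨n, rfl⟩ : ∃ n, d = a + (n + 1) := ⟨d - a - 1, by omega⟩
  have hlow : ∀ j ∈ range a,
      ((a + (n + 1)).choose (j + 1) * (j + 1).choose (a + 1) : R) * (-2) ^ j = 0 := by
    intro j hj
    rw [Nat.choose_eq_zero_of_lt (by have := mem_range.1 hj; omega : j + 1 < a + 1)]
    simp
  have hhigh : ∀ t ∈ range (n + 1),
      ((a + (n + 1)).choose (a + t + 1) * (a + t + 1).choose (a + 1) : R) * (-2) ^ (a + t) =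
        (-2) ^ a * (a + (n + 1)).choose (a + 1) * ((n.choose t : R) * (-2) ^ t) := by
    intro t _
    rw [← Nat.cast_mul, Nat.choose_mul (by omega), show a + (n + 1) - (a + 1) = n by omega,
      show a + t + 1 - (a + 1) = t by omega]
    push_cast
    ring
  rw [sum_range_add, sum_eq_zero hlow, zero_add, sum_congr rfl hhigh, ← mul_sum,
    sum_range_choose_mul_pow, show a + (n + 1) - 1 = a + n by omega, neg_pow (2 : R) a]
  norm_num [pow_add]
  ring

variable [BinomialRing R]

theorem prod_Icc_sub_natCast_eq_factorial_mul_choose (r : R) (j : ℕ) :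
    ∏ k ∈ Icc 1 j, (r - k) = j.factorial * Ring.choose (r - 1) j := by
  rw [← nsmul_eq_mul, ← Ring.descPochhammer_eq_factorial_smul_choose,
    ← eval₂_smulOneHom_eq_smeval, Subsingleton.elim RingHom.smulOneHom (Int.castRingHom R),
    ← eval_map, descPochhammer_map, descPochhammer_eval_eq_prod_range,
    ← Ico_add_one_right_eq_Icc, ← zero_add 1, ← prod_Ico_add', range_eq_Ico]
  exact prod_congr rfl fun k _ => by push_cast; ring

theorem Ring.choose_neg_sub_one_eq_sum (r : R) {j n : ℕ} (hj : j < n) :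
    Ring.choose (-r - 1) j =
      (-1) ^ j * ∑ a ∈ range n, ((j + 1).choose (a + 1) : R) * Ring.choose (r - 1) a := by
  rw [neg_sub_left, Ring.choose_neg, Units.smul_def, Int.coe_negOnePow_natCast, zsmul_eq_mul,
    Int.cast_pow, Int.cast_neg, Int.cast_one,
    show 1 + r + j - 1 = r - 1 + ((j + 1 : ℕ) : R) by push_cast; ring,
    Ring.add_choose_eq _ (Commute.all _ _),
    Nat.sum_antidiagonal_eq_sum_range_succ
      (fun a b => Ring.choose (r - 1) a * Ring.choose ((j + 1 : ℕ) : R) b),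
    ← sum_range_add_sum_Ico _ (show j + 1 ≤ n by omega)]
  have hhigh : ∀ k ∈ Ico (j + 1) n, ((j + 1).choose (k + 1) : R) * Ring.choose (r - 1) k = 0 :=
    fun k hk => by
      rw [Nat.choose_eq_zero_of_lt (by have := (mem_Ico.1 hk).1; omega), Nat.cast_zero, zero_mul]
  rw [sum_eq_zero hhigh, add_zero]
  congr 1
  refine sum_congr rfl fun k hk => ?_
  rw [Ring.choose_natCast, mul_comm,
    Nat.choose_symm_of_eq_add (b := k + 1) (by have := mem_range.1 hk; omega)]

def binomialP (d : ℕ) (r : R) : R :=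
  ∑ j ∈ range d, (d.choose (j + 1) : R) * 2 ^ j * Ring.choose (r - 1) j

theorem binomialP_neg (d : ℕ) (r : R) : binomialP d (-r) = (-1) ^ (d - 1) * binomialP d r := by
  have hterm : ∀ j ∈ range d, (d.choose (j + 1) : R) * 2 ^ j * Ring.choose (-r - 1) j =
      ∑ a ∈ range d, (d.choose (j + 1) * (j + 1).choose (a + 1) : R) * (-2) ^ j *
        Ring.choose (r - 1) a := by
    intro j hj
    rw [Ring.choose_neg_sub_one_eq_sum r (mem_range.1 hj), mul_sum, mul_sum]
    refine sum_congr rfl fun a _ => ?_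
    rw [neg_pow' 2 j]
    ring
  have hcoeff : ∀ a ∈ range d, ∑ j ∈ range d,
      (d.choose (j + 1) * (j + 1).choose (a + 1) : R) * (-2) ^ j * Ring.choose (r - 1) a =
        (-1) ^ (d - 1) * ((d.choose (a + 1) : R) * 2 ^ a * Ring.choose (r - 1) a) := by
    intro a ha
    rw [← sum_mul, sum_range_choose_succ_mul_choose_succ_mul_neg_two_pow (mem_range.1 ha)]
    ring
  rw [binomialP, sum_congr rfl hterm, sum_comm, sum_congr rfl hcoeff, ← mul_sum, binomialP]

theorem Ring.choose_neg_one (j : ℕ) : Ring.choose (-1 : R) j = (-1) ^ j := by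
  rw [Ring.choose_neg, add_sub_cancel_left, Ring.choose_natCast, Nat.choose_self, Nat.cast_one,
    Units.smul_def, Int.coe_negOnePow_natCast, zsmul_eq_mul, mul_one]
  norm_cast

theorem neg_two_mul_binomialP_zero (d : ℕ) : -2 * binomialP d (0 : R) = (-1) ^ d - 1 := by
  have hterm : ∀ j ∈ range d, (d.choose (j + 1) : R) * 2 ^ j * Ring.choose (0 - 1) j =
      (d.choose (j + 1) : R) * (-2) ^ j := by
    intro j _
    rw [zero_sub, Ring.choose_neg_one, neg_pow' 2 j, mul_assoc]
  rw [binomialP, sum_congr rfl hterm, mul_sum_range_choose_succ_mul_pow]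
  norm_num

end BinomialRing

theorem Ppoly_eq_sum_range (d : ℕ) : Ppoly d = ∑ j ∈ range d,
    C ((d.choose (j + 1) : ℝ) * 2 ^ j / j.factorial) * ∏ k ∈ Icc 1 j, (X - C (k : ℝ)) := by
  rw [Ppoly, ← Ico_add_one_right_eq_Icc, sum_Ico_eq_sum_range, Nat.add_sub_cancel]
  simp only [add_comm 1, Nat.add_sub_cancel]

theorem Ppoly_eval (d : ℕ) (r : ℝ) : (Ppoly d).eval r = binomialP d r := by
  rw [Ppoly_eq_sum_range, eval_finsetSum, binomialP]
  refine sum_congr rfl fun j _ => ?_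
  simp only [eval_mul, eval_C, eval_prod, eval_sub, eval_X]
  rw [prod_Icc_sub_natCast_eq_factorial_mul_choose]
  field_simp

theorem Ppoly_comp_neg_X (d : ℕ) : (Ppoly d).comp (-X) = (-1) ^ (d - 1) * Ppoly d :=
  Polynomial.funext fun r => by simp [Ppoly_eval, binomialP_neg]

theorem Ppoly_natDegree_and_coeff {d : ℕ} (hd : 1 ≤ d) :
    (Ppoly d).natDegree = d - 1 ∧ (Ppoly d).coeff (d - 1) = 2 ^ (d - 1) / (d - 1).factorial := by
  obtain ⟨n, rfl⟩ : ∃ n, d = n + 1 := ⟨d - 1, by omega⟩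
  have hdeg_eq : ∀ j : ℕ, (∏ k ∈ Icc 1 j, (X - C (k : ℝ))).natDegree = j := fun j => by
    rw [natDegree_finsetProd_X_sub_C_eq_card, Nat.card_Icc, Nat.add_sub_cancel]
  have hdeg j := (hdeg_eq j).le
  have hmonic : (∏ k ∈ Icc 1 n, (X - C (k : ℝ))).coeff n = 1 := by
    simpa only [hdeg_eq] using
      (monic_prod_X_sub_C (fun k : ℕ => (k : ℝ)) (Icc 1 n)).coeff_natDegree
  have hcoeff := coeff_sum_range_C_mul_self hdeg hmonic
    fun j => ((n + 1).choose (j + 1) : ℝ) * 2 ^ j / j.factorial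
  rw [← Ppoly_eq_sum_range, Nat.choose_self, Nat.cast_one, one_mul] at hcoeff
  rw [Nat.add_sub_cancel]
  refine ⟨natDegree_eq_of_le_of_coeff_ne_zero ?_ (by rw [hcoeff]; positivity), hcoeff⟩
  rw [Ppoly_eq_sum_range]
  exact natDegree_sum_range_C_mul_le hdeg _ n

/-- For `d ≥ 1`, `P_d` has degree `d−1` with leading coefficient `2^{d-1}/(d-1)!`;
it is an even polynomial when `d` is odd and an odd polynomial when `d` is even,
and when `d` is odd its constant term is `1`. -/
theorem stmt11 (d : ℕ) (hd : 1 ≤ d) :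
    (Ppoly d).natDegree = d - 1 ∧
    (Ppoly d).leadingCoeff = 2 ^ (d - 1) / (Nat.factorial (d - 1) : ℝ) ∧
    (Odd d → (Ppoly d).comp (-Polynomial.X) = Ppoly d) ∧
    (Even d → (Ppoly d).comp (-Polynomial.X) = -Ppoly d) ∧
    (Odd d → (Ppoly d).coeff 0 = 1) := by
  obtain ⟨hdeg, htop⟩ := Ppoly_natDegree_and_coeff hd
  refine ⟨hdeg, by rw [leadingCoeff, hdeg, htop], fun hodd => ?_, fun heven => ?_,
    fun hodd => ?_⟩
  · rw [Ppoly_comp_neg_X, (Nat.Odd.sub_odd hodd odd_one).neg_one_pow, one_mul]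
  · rw [Ppoly_comp_neg_X, (Nat.Even.sub_odd hd heven odd_one).neg_one_pow, neg_one_mul]
  · have h := neg_two_mul_binomialP_zero (R := ℝ) d
    rw [← Ppoly_eval, hodd.neg_one_pow] at h
    rw [coeff_zero_eq_eval_zero]
    linarith

end
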